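/- Let (X,d) be a compact, connected metric space and ε > 0, with D_ε the ε-intrinsic metric. Then (X, D_ε) has no refinement critical values greater than ε: for every δ > ε, every two-point δ-chain {x,y} in (X,D_ε) is δ-homotopic (in the metric D_ε) to an ε-chain. -/

import Mathlib

open Metric

variable {X : Type*} [MetricSpace X]

/-- `c` is an `ε`-chain: a nonempty finite sequence with consecutive distances `< ε`. -/
def IsEChain (ε : ℝ) (c : List X) : Prop :=
  c ≠ [] ∧ c.Chain' (fun a b => dist a b < ε)

/-- A basic move: addition or removal of a single point, keeping endpoints fixed,
with both chains `ε`-chains. -/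
def EStep (ε : ℝ) (c₁ c₂ : List X) : Prop :=
  IsEChain ε c₁ ∧ IsEChain ε c₂ ∧
  ∃ (pre post : List X) (a : X), pre ≠ [] ∧ post ≠ [] ∧
    ((c₁ = pre ++ post ∧ c₂ = pre ++ a :: post) ∨
     (c₁ = pre ++ a :: post ∧ c₂ = pre ++ post))

/-- `ε`-homotopy: a finite sequence of basic moves. -/
def EHomotopic (ε : ℝ) : List X → List X → Prop :=
  Relation.ReflTransGen (EStep ε)

/-- An `ε`-loop is `ε`-null if it is `ε`-homotopic to the trivial chain at its initial point. -/
def ENull (ε : ℝ) (c : List X) : Prop :=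
  ∃ x, c.head? = some x ∧ EHomotopic ε c [x, x]

/-- The length of a chain: the sum of consecutive distances. -/
def chainLength : List X → ℝ
  | [] => 0
  | [_] => 0
  | a :: b :: rest => dist a b + chainLength (b :: rest)

/-- The length of the `ε`-homotopy class of a chain. -/
noncomputable def classLength (ε : ℝ) (c : List X) : ℝ :=
  sInf {r | ∃ c', EHomotopic ε c c' ∧ chainLength c' = r}

/-- The `ε`-intrinsic "metric" induced by `d`. -/
noncomputable def Deps (ε : ℝ) (x y : X) : ℝ :=
  sInf {r | ∃ c : List X, IsEChain ε c ∧ c.head? = some x ∧ c.getLast? = some y ∧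
    chainLength c = r}

/-- A metric space is chain connected if any two points are joined by `ε`-chains
for every `ε > 0`. -/
def ChainConnected (X : Type*) [MetricSpace X] : Prop :=
  ∀ ε > 0, ∀ x y : X, ∃ c : List X, IsEChain ε c ∧ c.head? = some x ∧ c.getLast? = some y

/-- A `δ`-chain with respect to an arbitrary distance function `d`. -/
def IsDChain (d : X → X → ℝ) (δ : ℝ) (c : List X) : Prop :=
  c ≠ [] ∧ c.Chain' (fun a b => d a b < δ)

/-- A basic move with respect to an arbitrary distance function `d`. -/
def DStep (d : X → X → ℝ) (δ : ℝ) (c₁ c₂ : List X) : Prop :=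
  IsDChain d δ c₁ ∧ IsDChain d δ c₂ ∧
  ∃ (pre post : List X) (a : X), pre ≠ [] ∧ post ≠ [] ∧
    ((c₁ = pre ++ post ∧ c₂ = pre ++ a :: post) ∨
     (c₁ = pre ++ a :: post ∧ c₂ = pre ++ post))

/-- `δ`-homotopy with respect to an arbitrary distance function `d`. -/
def DHomotopic (d : X → X → ℝ) (δ : ℝ) : List X → List X → Prop :=
  Relation.ReflTransGen (DStep d δ)

lemma chainLength_nonneg : ∀ c : List X, 0 ≤ chainLength c
  | [] => le_refl 0
  | [_] => le_refl 0
  | a :: b :: rest => by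
    have := chainLength_nonneg (b :: rest)
    simp only [chainLength]
    positivity

lemma extend_chain {ε : ℝ} {c : List X} {y z : X} (hc : IsEChain ε c)
    (hy : c.getLast? = some y) (hz : dist y z < ε) :
    IsEChain ε (c ++ [z]) ∧ (c ++ [z]).head? = c.head? ∧ (c ++ [z]).getLast? = some z := by
  obtain ⟨hne, hch⟩ := hc
  refine ⟨⟨by simp, ?_⟩, ?_, ?_⟩
  · show List.IsChain _ _; rw [List.isChain_append]
    refine ⟨hch, List.isChain_singleton z, ?_⟩
    intro a ha b hb
    rw [hy] at ha
    simp only [List.head?_cons, Option.mem_some_iff] at ha hb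
    rw [← ha, ← hb]; exact hz
  · cases c with
    | nil => exact absurd rfl hne
    | cons a l => rfl
  · simp

lemma chain_connected_of_connected (X : Type*) [MetricSpace X] [ConnectedSpace X]
    {ε : ℝ} (hε : 0 < ε) (x y : X) :
    ∃ c : List X, IsEChain ε c ∧ c.head? = some x ∧ c.getLast? = some y := by
  set A : Set X := {y | ∃ c : List X, IsEChain ε c ∧ c.head? = some x ∧ c.getLast? = some y}
    with hA
  have hxA : x ∈ A := ⟨[x], ⟨by simp, List.isChain_singleton x⟩, rfl, rfl⟩
  have hopen : IsOpen A := by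
    rw [Metric.isOpen_iff]
    rintro y ⟨c, hc, hhd, hlast⟩
    refine ⟨ε, hε, fun z hz => ?_⟩
    rw [Metric.mem_ball, dist_comm] at hz
    obtain ⟨h1, h2, h3⟩ := extend_chain hc hlast hz
    exact ⟨c ++ [z], h1, h2.trans hhd, h3⟩
  have hopenc : IsOpen Aᶜ := by
    rw [Metric.isOpen_iff]
    rintro y hy
    refine ⟨ε, hε, fun z hz hzA => ?_⟩
    obtain ⟨c, hc, hhd, hlast⟩ := hzA
    rw [Metric.mem_ball] at hz
    obtain ⟨h1, h2, h3⟩ := extend_chain hc hlast hz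
    exact hy ⟨c ++ [y], h1, h2.trans hhd, h3⟩
  have hclopen : IsClopen A := ⟨isOpen_compl_iff.mp hopenc, hopen⟩
  have := hclopen.eq_univ ⟨x, hxA⟩
  have : y ∈ A := this ▸ Set.mem_univ y
  exact this

lemma Deps_le_chainLength {ε : ℝ} {c : List X} {x y : X} (hc : IsEChain ε c)
    (hx : c.head? = some x) (hy : c.getLast? = some y) :
    Deps ε x y ≤ chainLength c :=
  csInf_le ⟨0, by rintro r ⟨c', _, _, _, rfl⟩; exact chainLength_nonneg c'⟩
    ⟨c, hc, hx, hy, rfl⟩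

lemma Deps_le_dist {ε : ℝ} {a b : X} (h : dist a b < ε) : Deps ε a b ≤ dist a b := by
  have := Deps_le_chainLength (ε := ε) (c := [a, b]) (x := a) (y := b)
    ⟨by simp, List.isChain_pair.mpr h⟩ rfl rfl
  simpa [chainLength] using this

lemma Deps_self_nonpos {ε : ℝ} (hε : 0 < ε) (a : X) : Deps ε a a ≤ 0 := by
  have := Deps_le_chainLength (ε := ε) (c := [a]) (x := a) (y := a)
    ⟨by simp, List.isChain_singleton a⟩ rfl rfl
  simpa [chainLength] using this

lemma DStep_head {d : X → X → ℝ} {δ : ℝ} {c₁ c₂ : List X} (h : DStep d δ c₁ c₂) :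
    c₁.head? = c₂.head? := by
  obtain ⟨_, _, pre, post, a, hpre, hpost, h | h⟩ := h <;>
  · obtain ⟨h1, h2⟩ := h
    subst h1; subst h2
    cases pre with
    | nil => exact absurd rfl hpre
    | cons p l => rfl

lemma DStep_cons {d : X → X → ℝ} {δ : ℝ} {c₁ c₂ : List X} {a b : X}
    (h : DStep d δ c₁ c₂) (hb : c₁.head? = some b) (hab : d a b < δ) :
    DStep d δ (a :: c₁) (a :: c₂) := by
  obtain ⟨⟨hn1, hc1⟩, ⟨hn2, hc2⟩, pre, post, p, hpre, hpost, hcase⟩ := h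
  have hb2 : c₂.head? = some b := by
    rw [← DStep_head ⟨⟨hn1, hc1⟩, ⟨hn2, hc2⟩, pre, post, p, hpre, hpost, hcase⟩, hb]
  refine ⟨⟨by simp, ?_⟩, ⟨by simp, ?_⟩, a :: pre, post, p, by simp, hpost, ?_⟩
  · show List.IsChain _ _; rw [List.isChain_cons]
    exact ⟨fun c hc => by rw [hb, Option.mem_some_iff] at hc; rw [← hc]; exact hab, hc1⟩
  · show List.IsChain _ _; rw [List.isChain_cons]
    exact ⟨fun c hc => by rw [hb2, Option.mem_some_iff] at hc; rw [← hc]; exact hab, hc2⟩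
  · rcases hcase with ⟨h1, h2⟩ | ⟨h1, h2⟩
    · exact Or.inl ⟨by rw [h1, List.cons_append], by rw [h2, List.cons_append]⟩
    · exact Or.inr ⟨by rw [h1, List.cons_append], by rw [h2, List.cons_append]⟩

lemma DHomotopic_head {d : X → X → ℝ} {δ : ℝ} {c₁ c₂ : List X}
    (h : DHomotopic d δ c₁ c₂) : c₁.head? = c₂.head? := by
  induction h with
  | refl => rfl
  | tail _ hstep ih => rw [ih, DStep_head hstep]

lemma DHomotopic_cons {d : X → X → ℝ} {δ : ℝ} {c₁ c₂ : List X} {a b : X}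
    (h : DHomotopic d δ c₁ c₂) (hb : c₁.head? = some b) (hab : d a b < δ) :
    DHomotopic d δ (a :: c₁) (a :: c₂) := by
  induction h with
  | refl => exact Relation.ReflTransGen.refl
  | tail hcd hstep ih =>
    exact ih.tail (DStep_cons hstep ((DHomotopic_head hcd).symm.trans hb) hab)

lemma main_induction {ε δ : ℝ} (hε : 0 < ε) (hεδ : ε < δ) :
    ∀ (l : List X) (a y : X), (a :: l).Chain' (fun p q => dist p q < ε) →
      (a :: l).getLast? = some y → chainLength (a :: l) < δ → Deps ε a y < δ →
      DHomotopic (Deps (X := X) ε) δ [a, y] ((a :: l) ++ [y])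
  | [], a, y => by
    intro _ hlast _ _
    simp only [List.getLast?_singleton, Option.some.injEq] at hlast
    subst hlast
    exact Relation.ReflTransGen.refl
  | b :: l, a, y => by
    intro hch hlast hlen hD
    have hch' : (b :: l).Chain' (fun p q => dist p q < ε) := hch.tail
    have hab : dist a b < ε := (List.isChain_cons_cons.mp hch).1
    have hlast' : (b :: l).getLast? = some y := by
      rw [List.getLast?_cons_cons] at hlast; exact hlast
    have hlen' : chainLength (b :: l) < δ := by
      have : chainLength (a :: b :: l) = dist a b + chainLength (b :: l) := rfl
      nlinarith [dist_nonneg (x := a) (y := b)]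
    have hDby : Deps ε b y < δ :=
      lt_of_le_of_lt (Deps_le_chainLength ⟨by simp, hch'⟩ rfl hlast') hlen'
    have hDab : Deps ε a b < δ := lt_of_le_of_lt (Deps_le_dist hab) (hab.trans hεδ)
    -- step [a, y] → [a, b, y]
    have step1 : DStep (Deps (X := X) ε) δ [a, y] [a, b, y] := by
      refine ⟨⟨by simp, ?_⟩, ⟨by simp, ?_⟩, [a], [y], b, by simp, by simp, Or.inl ⟨rfl, rfl⟩⟩
      · exact List.isChain_pair.mpr hD
      · exact List.IsChain.cons_cons hDab (List.isChain_pair.mpr hDby)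
    have ih := main_induction hε hεδ l b y hch' hlast' hlen' hDby
    have lifted : DHomotopic (Deps (X := X) ε) δ (a :: [b, y]) (a :: ((b :: l) ++ [y])) :=
      DHomotopic_cons ih rfl hDab
    exact (Relation.ReflTransGen.single step1).trans lifted

theorem Deps_no_refinement_critical_values_above (X : Type*) [MetricSpace X]
    [CompactSpace X] [ConnectedSpace X] {ε : ℝ} (hε : 0 < ε) :
    ∀ δ : ℝ, ε < δ → ∀ x y : X, Deps ε x y < δ →
      ∃ c : List X, IsDChain (Deps (X := X) ε) ε c ∧
        DHomotopic (Deps (X := X) ε) δ [x, y] c := by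
  intro δ hεδ x y hD
  -- get a chain of length < δ
  have hne : {r | ∃ c : List X, IsEChain ε c ∧ c.head? = some x ∧ c.getLast? = some y ∧
      chainLength c = r}.Nonempty := by
    obtain ⟨c, hc, hx, hy⟩ := chain_connected_of_connected X hε x y
    exact ⟨chainLength c, c, hc, hx, hy, rfl⟩
  obtain ⟨r, ⟨c, hc, hx, hy, hr⟩, hrδ⟩ := exists_lt_of_csInf_lt hne hD
  subst hr
  cases c with
  | nil => exact absurd rfl hc.1
  | cons a l =>
    simp only [List.head?_cons, Option.some.injEq] at hx
    subst hx
    refine ⟨(a :: l) ++ [y], ⟨by simp, ?_⟩, main_induction hε hεδ l a y hc.2 hy hrδ hD⟩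
    show List.IsChain _ _; rw [List.isChain_append]
    refine ⟨hc.2.imp (fun {p q} h => lt_of_le_of_lt (Deps_le_dist h) h), ?_, ?_⟩
    · exact List.isChain_singleton y
    · intro p hp q hq
      rw [hy] at hp
      simp only [List.head?_cons, Option.mem_some_iff] at hp hq
      rw [← hp, ← hq]
      exact lt_of_le_of_lt (Deps_self_nonpos hε y) hε
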